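/- For every natural number N ≥ 1 and a, b, t such that all denominators are nonzero: F_N(a,b;t) = ((1 - t q^N)(aq;q)_N/(bq;q)_N) ∑_{n=0}^{N} [N choose n] (b/a;q)_n (aq;q)_{N-n} (aq)^n / ((aq;q)_N (1 - t q^n)), where F_N(a,b;t) := ∑_{n=0}^{N} [N choose n] (aq;q)_n (t;q)_{N-n} (q;q)_n t^n / ((bq;q)_n (t;q)_N). (Partial fraction decomposition of the finite Fine function.) -/

import Mathlib

open Finset

/-- q-Pochhammer symbol (a;q)_n = ∏_{k=0}^{n-1} (1 - a q^k). -/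
noncomputable def qP (a q : ℂ) (n : ℕ) : ℂ := ∏ k ∈ Finset.range n, (1 - a * q ^ k)

/-- Gaussian (q-)binomial coefficient [N choose n]_q. -/
noncomputable def qBinom (q : ℂ) (N n : ℕ) : ℂ := qP q q N / (qP q q n * qP q q (N - n))

/-- Finite analogue of Fine's function. -/
noncomputable def fineN (q : ℂ) (N : ℕ) (a b t : ℂ) : ℂ :=
  ∑ n ∈ Finset.range (N + 1),
    qBinom q N n * (qP (a * q) q n * qP t q (N - n) * qP q q n * t ^ n /
      (qP (b * q) q n * qP t q N))

/-!
Multiplied by `(t;q)_N`, both sides become polynomials in `t` of degree at most `N`, so for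
`q ≠ 0` it suffices to compare them at the `N + 1` distinct points `t = q⁻ᵐ`, `0 ≤ m ≤ N`. There the
partial-fraction side keeps only its `m`-th term, while on the Fine side only the terms with
`n ≥ N - m` survive; their sum is an `m`-th `q`-difference of `j ↦ (aq;q)_j / (bq;q)_j`, which is
evaluated in closed form by induction on `m` with the `q`-Pascal rule. For `q = 0` both sides
equal `(1 - t 0^N) / (1 - t)`.
-/

open Polynomial

lemma pow_mul_prod_range (c : ℂ) (n : ℕ) (f : ℕ → ℂ) :
    c ^ n * ∏ k ∈ range n, f k = ∏ k ∈ range n, c * f k := by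
  simpa using pow_card_mul_prod (s := range n) (f := f) (b := c)

lemma qP_zero (a q : ℂ) : qP a q 0 = 1 := by simp [qP]

lemma qP_succ (a q : ℂ) (n : ℕ) : qP a q (n + 1) = qP a q n * (1 - a * q ^ n) :=
  prod_range_succ _ _

lemma qP_zero_left (q : ℂ) (n : ℕ) : qP 0 q n = 1 := by simp [qP]

lemma qP_zero_right_succ (x : ℂ) (n : ℕ) : qP x 0 (n + 1) = 1 - x := by
  simp [qP, prod_range_succ']

lemma qP_mul_ne_zero {b q : ℂ} {N : ℕ} (hb : ∀ n, 1 ≤ n → n ≤ N → 1 - b * q ^ n ≠ 0)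
    {k : ℕ} (hk : k ≤ N) : qP (b * q) q k ≠ 0 :=
  prod_ne_zero_iff.2 fun j hj => by
    rw [mul_assoc, ← pow_succ']
    exact hb (j + 1) (by omega) (by simp at hj; omega)

lemma qP_self_ne_zero {q : ℂ} {N : ℕ} (hq : ∀ n, 1 ≤ n → n ≤ N → (1 : ℂ) - q ^ n ≠ 0)
    {k : ℕ} (hk : k ≤ N) : qP q q k ≠ 0 := by
  simpa using qP_mul_ne_zero (b := 1) (by simpa using hq) hk

lemma qBinom_zero_right {q : ℂ} {N : ℕ} (h : qP q q N ≠ 0) : qBinom q N 0 = 1 := by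
  simp [qBinom, qP_zero, h]

lemma qBinom_self {q : ℂ} {N : ℕ} (h : qP q q N ≠ 0) : qBinom q N N = 1 := by
  simp [qBinom, qP_zero, h]

lemma qBinom_succ_succ {q : ℂ} {m i : ℕ} (him : i < m)
    (hq : ∀ n, 1 ≤ n → n ≤ m + 1 → (1 : ℂ) - q ^ n ≠ 0) :
    qBinom q (m + 1) (i + 1) = qBinom q m (i + 1) + q ^ (m - i) * qBinom q m i := by
  obtain ⟨j, rfl⟩ := Nat.exists_eq_add_of_lt him
  have hq' : ∀ n, 1 ≤ n → n ≤ i + j + 1 → (1 : ℂ) - q ^ n ≠ 0 :=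
    fun n h1 h2 => hq n h1 (by omega)
  have h1 := qP_self_ne_zero hq' (k := i) (by omega)
  have h2 := qP_self_ne_zero hq' (k := j) (by omega)
  have h3 : 1 - q * q ^ i ≠ 0 := by rw [← pow_succ']; exact hq' _ (by omega) (by omega)
  have h4 : 1 - q * q ^ j ≠ 0 := by rw [← pow_succ']; exact hq' _ (by omega) (by omega)
  simp only [qBinom, show i + j + 1 + 1 - (i + 1) = j + 1 by omega,
    show i + j + 1 - (i + 1) = j by omega, show i + j + 1 - i = j + 1 by omega, qP_succ]
  field_simp
  ring

lemma pow_choose_two_succ (q : ℂ) (i : ℕ) : q ^ (i + 1).choose 2 = q ^ i.choose 2 * q ^ i := by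
  rw [Nat.choose_succ_succ', Nat.choose_one_right, pow_add, mul_comm]

lemma sum_qBinom_succ_mul {q : ℂ} {m : ℕ} (hq : ∀ n, 1 ≤ n → n ≤ m + 1 → (1 : ℂ) - q ^ n ≠ 0)
    (g : ℕ → ℂ) :
    ∑ i ∈ range (m + 2), qBinom q (m + 1) i * (-1) ^ i * q ^ i.choose 2 * g i =
      ∑ i ∈ range (m + 1),
        qBinom q m i * (-1) ^ i * q ^ i.choose 2 * (g i - q ^ m * g (i + 1)) := by
  set A : ℕ → ℂ := fun i => qBinom q m i * (-1) ^ i * q ^ i.choose 2 * g i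
  set B : ℕ → ℂ := fun i => qBinom q m i * (-1) ^ i * q ^ i.choose 2 * (q ^ m * g (i + 1))
  have hm := qP_self_ne_zero hq (k := m) (by omega)
  have hm1 := qP_self_ne_zero hq (k := m + 1) le_rfl
  have hpascal : ∀ i ∈ range m, qBinom q (m + 1) (i + 1) * (-1) ^ (i + 1) *
      q ^ (i + 1).choose 2 * g (i + 1) = A (i + 1) - B i := by
    intro i hi
    have hpow : q ^ (m - i) * q ^ i = q ^ m := by
      rw [← pow_add, Nat.sub_add_cancel (mem_range.1 hi).le]
    simp only [A, B, qBinom_succ_succ (mem_range.1 hi) hq, pow_choose_two_succ]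
    linear_combination (-(-1) ^ i * q ^ i.choose 2 * qBinom q m i * g (i + 1)) * hpow
  have hlast : qBinom q (m + 1) (m + 1) * (-1) ^ (m + 1) * q ^ (m + 1).choose 2 * g (m + 1) =
      -B m := by
    simp only [B, qBinom_self hm, qBinom_self hm1, pow_choose_two_succ]
    ring
  rw [sum_range_succ, sum_range_succ', sum_congr rfl hpascal, hlast, sum_sub_distrib,
    qBinom_zero_right hm1]
  simp only [mul_sub]
  rw [sum_sub_distrib, sum_range_succ' A, sum_range_succ B]
  simp only [A, qBinom_zero_right hm]
  ring

lemma qP_mul_prod_div_qP_recurrence (a b q : ℂ) {m M : ℕ} (hmM : m ≤ M) (hB : qP (b * q) q M ≠ 0)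
    (hb : 1 - b * q ^ (M + 1) ≠ 0) :
    qP (a * q) q (M + 1 - m) * (∏ i ∈ range m, (b * q ^ (M + 1) - a * q ^ (M + 1 - i))) /
        qP (b * q) q (M + 1) -
      q ^ m * (qP (a * q) q (M - m) * (∏ i ∈ range m, (b * q ^ M - a * q ^ (M - i))) /
        qP (b * q) q M) =
    qP (a * q) q (M + 1 - (m + 1)) *
        (∏ i ∈ range (m + 1), (b * q ^ (M + 1) - a * q ^ (M + 1 - i))) / qP (b * q) q (M + 1) := by
  have hshift : q ^ m * ∏ i ∈ range m, (b * q ^ M - a * q ^ (M - i)) =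
      ∏ i ∈ range m, (b * q ^ (M + 1) - a * q ^ (M + 1 - i)) := by
    rw [pow_mul_prod_range]
    refine prod_congr rfl fun i hi => ?_
    rw [show M + 1 - i = M - i + 1 by simp at hi; omega]
    ring
  rw [prod_range_succ, ← hshift]
  obtain ⟨r, rfl⟩ := Nat.exists_eq_add_of_le hmM
  rw [show m + r + 1 - (m + 1) = r by omega, show m + r + 1 - m = r + 1 by omega,
    Nat.add_sub_cancel_left, qP_succ, qP_succ]
  have hb' : 1 - b * q * q ^ (m + r) ≠ 0 := by rwa [mul_assoc, ← pow_succ']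
  -- name the denominators, so that `field_simp` cannot reorder `b * q` away from `hb'` and `hB`
  rw [show b * q ^ (m + r + 1) = 1 - (1 - b * q * q ^ (m + r)) by ring]
  generalize 1 - b * q * q ^ (m + r) = β at hb' ⊢
  generalize qP (b * q) q (m + r) = B at hB ⊢
  field_simp
  ring

lemma sum_qBinom_mul_qP_div_qP (a b q : ℂ) {m N : ℕ} (hmN : m ≤ N)
    (hq : ∀ n, 1 ≤ n → n ≤ m → (1 : ℂ) - q ^ n ≠ 0)
    (hb : ∀ n, 1 ≤ n → n ≤ N → 1 - b * q ^ n ≠ 0) :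
    ∑ i ∈ range (m + 1),
        qBinom q m i * (-1) ^ i * q ^ i.choose 2 * (qP (a * q) q (N - i) / qP (b * q) q (N - i)) =
      qP (a * q) q (N - m) * (∏ i ∈ range m, (b * q ^ N - a * q ^ (N - i))) /
        qP (b * q) q N := by
  induction m generalizing N with
  | zero => simp [qBinom, qP_zero]
  | succ m ih =>
    obtain ⟨M, rfl⟩ : ∃ M, N = M + 1 := ⟨N - 1, by omega⟩
    have hq' : ∀ n, 1 ≤ n → n ≤ m → (1 : ℂ) - q ^ n ≠ 0 := fun n h1 h2 => hq n h1 (by omega)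
    have hb' : ∀ n, 1 ≤ n → n ≤ M → 1 - b * q ^ n ≠ 0 := fun n h1 h2 => hb n h1 (by omega)
    rw [sum_qBinom_succ_mul hq, ← qP_mul_prod_div_qP_recurrence a b q (by omega)
      (qP_mul_ne_zero hb' le_rfl) (hb _ (by omega) le_rfl), ← ih (by omega) hq' hb,
      ← ih (by omega) hq' hb', mul_sum, ← sum_sub_distrib]
    refine sum_congr rfl fun i _ => ?_
    rw [Nat.add_sub_add_right]
    ring

lemma prod_range_pow_sub_pow_mul_qP (q : ℂ) {i m : ℕ} (him : i ≤ m) :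
    (∏ k ∈ range i, (q ^ m - q ^ k)) * qP q q (m - i) = (-1) ^ i * q ^ i.choose 2 * qP q q m := by
  obtain ⟨j, rfl⟩ := Nat.exists_eq_add_of_le' him
  rw [Nat.add_sub_cancel]
  clear him
  induction i with
  | zero => simp
  | succ i ih =>
    have hshift : ∏ k ∈ range i, (q ^ (j + (i + 1)) - q ^ (k + 1)) =
        q ^ i * ∏ k ∈ range i, (q ^ (j + i) - q ^ k) := by
      rw [pow_mul_prod_range]
      exact prod_congr rfl fun k _ => by ring
    rw [prod_range_succ', hshift, show j + (i + 1) = j + i + 1 by ring, qP_succ,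
      pow_choose_two_succ]
    linear_combination (q ^ (j + i + 1) - 1) * q ^ i * ih

lemma prod_range_sub_mul_pow_eq_qP (a b q : ℂ) {m N : ℕ} (hmN : m ≤ N) (ha : a ≠ 0) :
    ∏ i ∈ range m, (b * q ^ N - a * q ^ (N - i)) =
      (-1) ^ m * q ^ m.choose 2 * q ^ (m * (N - m)) * (a * q) ^ m * qP (b / a) q m := by
  have hfactor : ∀ i ∈ range m, b * q ^ N - a * q ^ (N - i) =
      -1 * q ^ (m - 1 - i) * q ^ (N - m) * (a * q) * (1 - b / a * q ^ i) := by
    intro i hi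
    have hi := mem_range.1 hi
    have hNi : q ^ (N - i) = q ^ (m - 1 - i) * q ^ (N - m) * q := by
      rw [← pow_add, ← pow_succ]; congr 1; omega
    have hN : q ^ N = q ^ (N - i) * q ^ i := by rw [← pow_add]; congr 1; omega
    rw [hN, hNi]
    field_simp
    ring
  rw [prod_congr rfl hfactor]
  simp only [prod_mul_distrib, prod_const, card_range, qP]
  rw [prod_range_reflect (fun k => q ^ k) m, prod_pow_eq_pow_sum, sum_range_id,
    ← Nat.choose_two_right, ← pow_mul, mul_comm (N - m), mul_pow]

noncomputable def fineCoeff (q : ℂ) (N : ℕ) (a b : ℂ) (n : ℕ) : ℂ :=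
  qBinom q N n * qP (a * q) q n * qP q q n / qP (b * q) q n

noncomputable def partialFractionCoeff (q : ℂ) (N : ℕ) (a b : ℂ) (n : ℕ) : ℂ :=
  qBinom q N n * qP (b / a) q n * qP (a * q) q (N - n) * (a * q) ^ n / qP (b * q) q N

section Nodes

variable {q a b : ℂ} {m N : ℕ}

lemma sum_fineCoeff_mul_prod_pow_sub (hmN : m ≤ N)
    (hq : ∀ n, 1 ≤ n → n ≤ N → (1 : ℂ) - q ^ n ≠ 0)
    (hb : ∀ n, 1 ≤ n → n ≤ N → 1 - b * q ^ n ≠ 0) :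
    ∑ n ∈ range (N + 1), fineCoeff q N a b n * ∏ k ∈ range (N - n), (q ^ m - q ^ k) =
      qP q q N * (qP (a * q) q (N - m) * (∏ i ∈ range m, (b * q ^ N - a * q ^ (N - i))) /
        qP (b * q) q N) := by
  -- after `n ↦ N - i`, the product contains the factor `q ^ m - q ^ m` as soon as `i > m`
  rw [← sum_qBinom_mul_qP_div_qP a b q hmN (fun n h1 h2 => hq n h1 (h2.trans hmN)) hb, mul_sum,
    ← sum_range_reflect, ← sum_subset (range_subset_range.2 (by omega : m + 1 ≤ N + 1))]
  · refine sum_congr rfl fun i hi => ?_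
    have him : i ≤ m := Nat.lt_succ_iff.1 (mem_range.1 hi)
    have h1 := qP_self_ne_zero hq (k := i) (by omega)
    have h2 := qP_self_ne_zero hq (k := m - i) (by omega)
    have h3 := qP_self_ne_zero hq (k := N - i) (by omega)
    have h4 := qP_mul_ne_zero hb (k := N - i) (by omega)
    rw [Nat.add_sub_cancel, Nat.sub_sub_self (him.trans hmN),
      eq_div_of_mul_eq h2 (prod_range_pow_sub_pow_mul_qP q him)]
    simp only [fineCoeff, qBinom, Nat.sub_sub_self (him.trans hmN)]
    field_simp
  · intro i hi hmi
    rw [prod_eq_zero (i := m) (by simp at hi hmi ⊢; omega) (sub_self _), mul_zero]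

lemma sum_partialFractionCoeff_mul_prod_pow_sub (hmN : m ≤ N) (ha : a ≠ 0)
    (hq : ∀ n, 1 ≤ n → n ≤ N → (1 : ℂ) - q ^ n ≠ 0) :
    ∑ n ∈ range (N + 1),
        partialFractionCoeff q N a b n * ∏ k ∈ (range (N + 1)).erase n, (q ^ m - q ^ k) =
      qP q q N * (qP (a * q) q (N - m) * (∏ i ∈ range m, (b * q ^ N - a * q ^ (N - i))) /
        qP (b * q) q N) := by
  have hm : m ∈ range (N + 1) := mem_range.2 (by omega)
  rw [sum_eq_single_of_mem m hm fun n _ hnm =>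
    by rw [prod_eq_zero (mem_erase.2 ⟨hnm.symm, hm⟩) (sub_self _), mul_zero]]
  have hsplit : (range (N + 1)).erase m = range m ∪ Ico (m + 1) (N + 1) := by
    ext k; simp only [mem_erase, mem_range, mem_union, mem_Ico]; omega
  have hdisj : Disjoint (range m) (Ico (m + 1) (N + 1)) :=
    disjoint_left.2 fun k hk hk' => by simp at hk hk'; omega
  have hbelow : ∏ k ∈ range m, (q ^ m - q ^ k) = (-1) ^ m * q ^ m.choose 2 * qP q q m := by
    simpa [qP_zero] using prod_range_pow_sub_pow_mul_qP q le_rfl (m := m)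
  have habove :
      ∏ k ∈ Ico (m + 1) (N + 1), (q ^ m - q ^ k) = q ^ (m * (N - m)) * qP q q (N - m) := by
    rw [prod_Ico_eq_prod_range, Nat.add_sub_add_right, qP, pow_mul, pow_mul_prod_range]
    exact prod_congr rfl fun k _ => by ring
  have h1 := qP_self_ne_zero hq (k := m) hmN
  have h2 := qP_self_ne_zero hq (k := N - m) (by omega)
  rw [hsplit, prod_union hdisj, hbelow, habove, partialFractionCoeff, qBinom,
    prod_range_sub_mul_pow_eq_qP a b q hmN ha]
  field_simp

end Nodes

lemma natDegree_one_sub_X_mul_C_le (c : ℂ) : (1 - X * C c).natDegree ≤ 1 := by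
  compute_degree

lemma natDegree_prod_one_sub_X_mul_C_le (s : Finset ℕ) (r : ℕ → ℂ) :
    (∏ k ∈ s, (1 - X * C (r k))).natDegree ≤ #s := by
  refine (natDegree_prod_le _ _).trans ?_
  simpa using sum_le_sum fun k (_ : k ∈ s) => natDegree_one_sub_X_mul_C_le (r k)

lemma eval_inv_prod_one_sub_X_mul_C {x : ℂ} (hx : x ≠ 0) (s : Finset ℕ) (r : ℕ → ℂ) :
    (∏ k ∈ s, (1 - X * C (r k))).eval x⁻¹ = x⁻¹ ^ #s * ∏ k ∈ s, (x - r k) := by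
  rw [eval_prod, pow_card_mul_prod]
  refine prod_congr rfl fun k _ => ?_
  simp only [eval_sub, eval_one, eval_mul, eval_X, eval_C]
  field_simp

noncomputable def fineNumerator (q : ℂ) (N : ℕ) (a b : ℂ) : ℂ[X] :=
  ∑ n ∈ range (N + 1), C (fineCoeff q N a b n) * X ^ n * ∏ k ∈ range (N - n), (1 - X * C (q ^ k))

noncomputable def partialFractionNumerator (q : ℂ) (N : ℕ) (a b : ℂ) : ℂ[X] :=
  ∑ n ∈ range (N + 1),
    C (partialFractionCoeff q N a b n) * ∏ k ∈ (range (N + 1)).erase n, (1 - X * C (q ^ k))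

section Numerators

variable (q a b : ℂ) (N : ℕ)

lemma natDegree_fineNumerator_le : (fineNumerator q N a b).natDegree ≤ N := by
  refine natDegree_sum_le_of_forall_le _ _ fun n hn => ?_
  have hprod := natDegree_prod_one_sub_X_mul_C_le (range (N - n)) (q ^ ·)
  rw [card_range] at hprod
  exact (natDegree_mul_le_of_le (natDegree_C_mul_X_pow_le _ n) hprod).trans
    (by simp at hn; omega)

lemma natDegree_partialFractionNumerator_le : (partialFractionNumerator q N a b).natDegree ≤ N := by
  refine natDegree_sum_le_of_forall_le _ _ fun n hn => ?_
  refine (natDegree_C_mul_le _ _).trans ?_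
  simpa [card_erase_of_mem hn] using
    natDegree_prod_one_sub_X_mul_C_le ((range (N + 1)).erase n) (q ^ ·)

lemma eval_inv_fineNumerator {x : ℂ} (hx : x ≠ 0) :
    (fineNumerator q N a b).eval x⁻¹ =
      x⁻¹ ^ N * ∑ n ∈ range (N + 1), fineCoeff q N a b n * ∏ k ∈ range (N - n), (x - q ^ k) := by
  simp only [fineNumerator, eval_finsetSum, eval_mul, eval_C, eval_pow, eval_X,
    eval_inv_prod_one_sub_X_mul_C hx, card_range, mul_sum]
  refine sum_congr rfl fun n hn => ?_
  rw [← pow_sub_mul_pow x⁻¹ (Nat.lt_succ_iff.1 (mem_range.1 hn))]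
  ring

lemma eval_inv_partialFractionNumerator {x : ℂ} (hx : x ≠ 0) :
    (partialFractionNumerator q N a b).eval x⁻¹ =
      x⁻¹ ^ N * ∑ n ∈ range (N + 1),
        partialFractionCoeff q N a b n * ∏ k ∈ (range (N + 1)).erase n, (x - q ^ k) := by
  simp only [partialFractionNumerator, eval_finsetSum, eval_mul, eval_C,
    eval_inv_prod_one_sub_X_mul_C hx, mul_sum]
  refine sum_congr rfl fun n hn => ?_
  rw [card_erase_of_mem hn, card_range, Nat.add_sub_cancel]
  ring

end Numerators

lemma injOn_pow {q : ℂ} {N : ℕ} (hq0 : q ≠ 0) (hq : ∀ n, 1 ≤ n → n ≤ N → (1 : ℂ) - q ^ n ≠ 0) :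
    Set.InjOn (q ^ ·) (range (N + 1) : Set ℕ) := by
  have hlt : ∀ i j, i < j → j ≤ N → q ^ i ≠ q ^ j := fun i j hij hj hij' => by
    refine hq (j - i) (by omega) (by omega) ?_
    rw [← mul_right_inj' (pow_ne_zero i hq0), mul_sub, ← pow_add, Nat.add_sub_cancel' hij.le,
      hij', mul_one, mul_zero, sub_self]
  intro i hi j hj hij
  simp only [coe_range, Set.mem_Iio] at hi hj
  rcases lt_trichotomy i j with h | h | h
  · exact absurd hij (hlt i j h (by omega))
  · exact h
  · exact absurd hij.symm (hlt j i h (by omega))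

lemma fineNumerator_eq_partialFractionNumerator {q a b : ℂ} {N : ℕ} (hq0 : q ≠ 0) (ha : a ≠ 0)
    (hq : ∀ n, 1 ≤ n → n ≤ N → (1 : ℂ) - q ^ n ≠ 0)
    (hb : ∀ n, 1 ≤ n → n ≤ N → 1 - b * q ^ n ≠ 0) :
    fineNumerator q N a b = partialFractionNumerator q N a b := by
  have hdeg : ∀ p : ℂ[X], p.natDegree ≤ N → p.degree < #(range (N + 1)) := fun p hp => by
    rw [card_range]
    exact (degree_le_of_natDegree_le hp).trans_lt (by exact_mod_cast N.lt_succ_self)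
  refine eq_of_degrees_lt_of_eval_index_eq (v := fun m => (q ^ m)⁻¹) _
    (inv_injective.comp_injOn (injOn_pow hq0 hq)) (hdeg _ (natDegree_fineNumerator_le ..))
    (hdeg _ (natDegree_partialFractionNumerator_le ..)) fun m hm => ?_
  have hmN : m ≤ N := Nat.lt_succ_iff.1 (mem_range.1 hm)
  rw [eval_inv_fineNumerator _ _ _ _ (pow_ne_zero m hq0),
    eval_inv_partialFractionNumerator _ _ _ _ (pow_ne_zero m hq0),
    sum_fineCoeff_mul_prod_pow_sub hmN hq hb, sum_partialFractionCoeff_mul_prod_pow_sub hmN ha hq]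

lemma fineN_eq_eval_fineNumerator_div (q : ℂ) (N : ℕ) (a b t : ℂ) :
    fineN q N a b t = (fineNumerator q N a b).eval t / qP t q N := by
  simp only [fineN, fineNumerator, eval_finsetSum, eval_mul, eval_C, eval_pow, eval_X, eval_prod,
    eval_sub, eval_one, sum_div, fineCoeff]
  refine sum_congr rfl fun n _ => ?_
  simp only [qP]
  ring

lemma partialFraction_eq_eval_partialFractionNumerator_div {q : ℂ} {N : ℕ} (a b : ℂ) {t : ℂ}
    (ht : ∀ n, n ≤ N → 1 - t * q ^ n ≠ 0) (haN : qP (a * q) q N ≠ 0) :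
    ((1 - t * q ^ N) * qP (a * q) q N / qP (b * q) q N) *
        ∑ n ∈ range (N + 1),
          qBinom q N n * (qP (b / a) q n * qP (a * q) q (N - n) * (a * q) ^ n /
            (qP (a * q) q N * (1 - t * q ^ n))) =
      (partialFractionNumerator q N a b).eval t / qP t q N := by
  have htN : qP t q N ≠ 0 := prod_ne_zero_iff.2 fun k hk => ht k (mem_range.1 hk).le
  simp only [partialFractionNumerator, eval_finsetSum, eval_mul, eval_C, eval_prod, eval_sub,
    eval_one, eval_X, mul_sum, sum_div]
  refine sum_congr rfl fun n hn => ?_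
  have htn := ht n (Nat.lt_succ_iff.1 (mem_range.1 hn))
  have hprod : ∏ k ∈ (range (N + 1)).erase n, (1 - t * q ^ k) =
      qP t q N * (1 - t * q ^ N) / (1 - t * q ^ n) := by
    rw [eq_div_iff htn, mul_comm, mul_prod_erase _ (fun k => 1 - t * q ^ k) hn, prod_range_succ,
      qP]
  rw [hprod, partialFractionCoeff]
  field_simp

lemma fineN_zero_left (N : ℕ) (a b : ℂ) {t : ℂ} (ht : 1 - t ≠ 0) :
    fineN 0 N a b t = (1 - t * 0 ^ N) / (1 - t) := by
  have hbinom : ∀ n, qBinom 0 N n = 1 := by simp [qBinom, qP_zero_left]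
  simp only [fineN, mul_zero, qP_zero_left, hbinom, one_mul, mul_one]
  rcases N with _ | M
  · simp [qP_zero, div_self ht]
  · rw [sum_range_succ, Nat.sub_self, qP_zero, qP_zero_right_succ, ← sum_div,
      sum_congr rfl fun n hn => by
        rw [show M + 1 - n = M - n + 1 by simp at hn; omega, qP_zero_right_succ]]
    rw [← mul_sum, mul_neg_geom_sum, ← add_div]
    simp

theorem stmt_16_general (N : ℕ) (q a b t : ℂ) (ha : a ≠ 0)
    (hq : ∀ n, 1 ≤ n → n ≤ N → (1 : ℂ) - q ^ n ≠ 0)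
    (ht : ∀ n, n ≤ N → 1 - t * q ^ n ≠ 0)
    (hb : ∀ n, 1 ≤ n → n ≤ N → 1 - b * q ^ n ≠ 0)
    (haN : qP (a * q) q N ≠ 0) :
    fineN q N a b t =
      ((1 - t * q ^ N) * qP (a * q) q N / qP (b * q) q N) *
        ∑ n ∈ Finset.range (N + 1),
          qBinom q N n * (qP (b / a) q n * qP (a * q) q (N - n) * (a * q) ^ n /
            (qP (a * q) q N * (1 - t * q ^ n))) := by
  rcases eq_or_ne q 0 with rfl | hq0
  · have ht0 : 1 - t ≠ 0 := by simpa using ht 0 N.zero_le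
    rw [fineN_zero_left N a b ht0, sum_eq_single_of_mem 0 (by simp) fun n _ hn => by simp [hn]]
    simp [qP_zero_left, qP_zero, qBinom, div_eq_mul_inv]
  · rw [fineN_eq_eval_fineNumerator_div, fineNumerator_eq_partialFractionNumerator hq0 ha hq hb,
      partialFraction_eq_eval_partialFractionNumerator_div a b ht haN]

/-- Partial fraction decomposition of the finite Fine function. -/
theorem stmt_16 (N : ℕ) (hN : 1 ≤ N) (q a b t : ℂ) (ha : a ≠ 0)
    (hq : ∀ n, 1 ≤ n → n ≤ N → (1 : ℂ) - q ^ n ≠ 0)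
    (ht : ∀ n, n ≤ N → 1 - t * q ^ n ≠ 0)
    (hb : ∀ n, 1 ≤ n → n ≤ N → 1 - b * q ^ n ≠ 0)
    (haN : qP (a * q) q N ≠ 0) :
    fineN q N a b t =
      ((1 - t * q ^ N) * qP (a * q) q N / qP (b * q) q N) *
        ∑ n ∈ Finset.range (N + 1),
          qBinom q N n * (qP (b / a) q n * qP (a * q) q (N - n) * (a * q) ^ n /
            (qP (a * q) q N * (1 - t * q ^ n))) :=
  stmt_16_general N q a b t ha hq ht hb haN
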